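/- arXiv:math/9906204 — 2 statements merged into one kernel-verified Lean document; each statement's English description precedes it below -/
import Mathlib

section
/- Let X be a finite set of d distinct points in projective n-space over an algebraically closed field k, with Hilbert function h_X. For every integer e with 1 ≤ e < d, there exists a subset Y ⊆ X of exactly e points whose Hilbert function satisfies h_Y(t) = min{h_X(t), e} for all t. -/
open MvPolynomial

noncomputable section

variable (k : Type*) [Field k]

/-- The degree-`t` part of the (homogeneous) vanishing ideal of a finite set `X` of
(representatives of) points of `ℙⁿ`: forms of degree `t` vanishing at every point of `X`. -/
def vpiece (n : ℕ) (X : Finset (Fin (n + 1) → k)) (t : ℕ) :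
    Submodule k (MvPolynomial (Fin (n + 1)) k) :=
  homogeneousSubmodule (Fin (n + 1)) k t ⊓
    ⨅ p ∈ X, LinearMap.ker ((aeval p : MvPolynomial (Fin (n + 1)) k →ₐ[k] k).toLinearMap)

/-- The Hilbert function of a finite set of points `X ⊆ ℙⁿ`:
`h_X(t) = dim S_t - dim I(X)_t = dim (S/I(X))_t`. -/
def hilb (n : ℕ) (X : Finset (Fin (n + 1) → k)) (t : ℕ) : ℕ :=
  Module.finrank k (homogeneousSubmodule (Fin (n + 1)) k t) -
    Module.finrank k (vpiece k n X t)

variable {k}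
variable {n : ℕ}

attribute [local instance] Classical.propDecidable

abbrev V (t : ℕ) : Submodule k (MvPolynomial (Fin (n + 1)) k) :=
  homogeneousSubmodule (Fin (n + 1)) k t

instance fdV (t : ℕ) : FiniteDimensional k (V (k := k) (n := n) t) := by
  have hle : V (k := k) (n := n) t ≤ restrictTotalDegree (Fin (n+1)) k t := by
    intro F hF
    rw [mem_restrictTotalDegree]
    exact ((mem_homogeneousSubmodule t F).mp hF).totalDegree_le
  have : FiniteDimensional k (restrictTotalDegree (Fin (n+1)) k t) := by
    infer_instance
  exact Submodule.finiteDimensional_of_le hle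

def evalMap (X : Finset (Fin (n + 1) → k)) (t : ℕ) :
    (V (k := k) (n := n) t) →ₗ[k] (X → k) :=
  LinearMap.pi fun p =>
    ((aeval (p : Fin (n + 1) → k) : MvPolynomial (Fin (n + 1)) k →ₐ[k] k).toLinearMap).comp
      (V (k := k) (n := n) t).subtype

lemma ker_evalMap (X : Finset (Fin (n + 1) → k)) (t : ℕ) :
    LinearMap.ker (evalMap X t) =
      Submodule.comap (V (k := k) (n := n) t).subtype (vpiece k n X t) := by
  ext F
  simp only [LinearMap.mem_ker, Submodule.mem_comap, vpiece, Submodule.mem_inf,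
    Submodule.mem_iInf, LinearMap.mem_ker, evalMap, funext_iff]
  constructor
  · intro h
    exact ⟨F.2, fun p hp => h ⟨p, hp⟩⟩
  · intro h p
    exact h.2 p p.2

lemma hilb_eq_finrank_range (X : Finset (Fin (n + 1) → k)) (t : ℕ) :
    hilb k n X t = Module.finrank k (LinearMap.range (evalMap X t)) := by
  have hle : vpiece k n X t ≤ V (k := k) (n := n) t := inf_le_left
  have e1 : Module.finrank k (LinearMap.ker (evalMap X t)) =
      Module.finrank k (vpiece k n X t) := by
    rw [ker_evalMap]
    exact LinearEquiv.finrank_eq (Submodule.comapSubtypeEquivOfLe hle)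
  have e2 : Module.finrank k (LinearMap.range (evalMap X t)) +
      Module.finrank k (LinearMap.ker (evalMap X t)) =
      Module.finrank k (homogeneousSubmodule (Fin (n+1)) k t) :=
    LinearMap.finrank_range_add_finrank_ker (evalMap (n := n) X t)
  rw [hilb, ← e1]
  omega

lemma hilb_le_card (X : Finset (Fin (n + 1) → k)) (t : ℕ) : hilb k n X t ≤ X.card := by
  rw [hilb_eq_finrank_range]
  calc Module.finrank k (LinearMap.range (evalMap X t)) ≤
      Module.finrank k ({x // x ∈ X} → k) := Submodule.finrank_le _
    _ = X.card := by simp [Module.finrank_pi]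

def PSep (X : Finset (Fin (n + 1) → k)) (p : Fin (n + 1) → k) (t : ℕ) : Prop :=
  ∃ F ∈ V (k := k) (n := n) t, (∀ q ∈ X, q ≠ p → aeval q F = 0) ∧ aeval p F ≠ 0

lemma hilb_eq_card_of_psep (X : Finset (Fin (n + 1) → k)) (t : ℕ)
    (h : ∀ p ∈ X, PSep X p t) : hilb k n X t = X.card := by
  classical
  have hsurj : LinearMap.range (evalMap (k := k) (n := n) X t) = ⊤ := by
    rw [Submodule.eq_top_iff']
    intro g
    have : g = ∑ p : X, g p • (Pi.single p (1 : k) : {x // x ∈ X} → k) := by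
      ext q; simp [Pi.single_apply, eq_comm]
    rw [this]
    apply Submodule.sum_mem
    intro p _
    apply Submodule.smul_mem
    obtain ⟨F, hFV, hF0, hFp⟩ := h p p.2
    have : evalMap (k := k) (n := n) X t ((aeval (p : Fin (n+1) → k) F)⁻¹ • ⟨F, hFV⟩) =
        Pi.single p 1 := by
      ext q
      simp only [evalMap, map_smul, LinearMap.pi_apply, LinearMap.comp_apply,
        Submodule.coe_subtype, Pi.smul_apply, smul_eq_mul, AlgHom.toLinearMap_apply]
      by_cases hq : q = p
      · subst hq; simp [inv_mul_cancel₀ hFp]; exact inv_mul_cancel₀ (by simpa using hFp)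
      · have : (q : Fin (n+1) → k) ≠ p := fun h => hq (Subtype.ext h)
        rw [hF0 q q.2 this, Pi.single_apply]
        simp [hq]
    exact ⟨_, this⟩
  rw [hilb_eq_finrank_range, hsurj]
  simp [Module.finrank_pi]

lemma psep_of_hilb_eq_card (X : Finset (Fin (n + 1) → k)) (t : ℕ)
    (h : hilb k n X t = X.card) : ∀ p ∈ X, PSep X p t := by
  classical
  intro p hp
  have hsurj : LinearMap.range (evalMap (k := k) (n := n) X t) = ⊤ := by
    apply Submodule.eq_top_of_finrank_eq
    rw [← hilb_eq_finrank_range, h]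
    simp [Module.finrank_pi]
  have : Pi.single (⟨p, hp⟩ : X) (1 : k) ∈ LinearMap.range (evalMap (k := k) (n := n) X t) := by
    rw [hsurj]; trivial
  obtain ⟨F, hF⟩ := this
  refine ⟨F.1, F.2, ?_, ?_⟩
  · intro q hq hqp
    have := congrFun hF ⟨q, hq⟩
    simp only [evalMap, LinearMap.pi_apply, LinearMap.comp_apply, Submodule.coe_subtype,
      AlgHom.toLinearMap_apply, Pi.single_apply] at this
    rw [this, if_neg]
    intro h
    exact hqp (by simpa using congrArg Subtype.val h)
  · have := congrFun hF ⟨p, hp⟩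
    simp only [evalMap, LinearMap.pi_apply, LinearMap.comp_apply, Submodule.coe_subtype,
      AlgHom.toLinearMap_apply] at this
    rw [this]
    simp

def linForm (c : Fin (n + 1) → k) : MvPolynomial (Fin (n + 1)) k :=
  ∑ i, C (c i) * X i

lemma linForm_mem_V (c : Fin (n + 1) → k) : linForm c ∈ V (k := k) (n := n) 1 := by
  rw [mem_homogeneousSubmodule]
  exact MvPolynomial.IsHomogeneous.sum _ _ _ fun i _ => isHomogeneous_C_mul_X (c i) i

lemma aeval_linForm (c p : Fin (n + 1) → k) :
    aeval p (linForm c) = ∑ i, c i * p i := by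
  simp [linForm]

lemma linForm_ne_zero {c : Fin (n + 1) → k} (hc : c ≠ 0) : linForm (k := k) c ≠ 0 := by
  classical
  obtain ⟨i, hi⟩ : ∃ i, c i ≠ 0 := by
    by_contra h
    push_neg at h
    exact hc (funext h)
  intro h
  have : MvPolynomial.coeff (Finsupp.single i 1) (linForm c) = c i := by
    simp only [linForm, MvPolynomial.coeff_sum, MvPolynomial.coeff_C_mul, coeff_X']
    rw [Finset.sum_eq_single i]
    · simp
    · intro j _ hj
      rw [if_neg, mul_zero]
      intro hsingle
      exact hj (by simpa using (Finsupp.single_left_inj one_ne_zero).mp hsingle)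
    · simp
  rw [h] at this
  simp at this
  exact hi this.symm

lemma exists_linForm [Infinite k] (X : Finset (Fin (n + 1) → k)) (hX0 : ∀ p ∈ X, p ≠ 0) :
    ∃ c : Fin (n + 1) → k, ∀ p ∈ X, aeval p (linForm c) ≠ 0 := by
  classical
  set P : MvPolynomial (Fin (n + 1)) k := ∏ p ∈ X, linForm p with hP
  have hPne : P ≠ 0 := Finset.prod_ne_zero_iff.mpr fun p hp => linForm_ne_zero (hX0 p hp)
  obtain ⟨c, hc⟩ : ∃ c : Fin (n + 1) → k, MvPolynomial.eval c P ≠ 0 := by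
    by_contra h
    push_neg at h
    exact hPne (MvPolynomial.funext fun x => by simp [h x])
  refine ⟨c, fun p hp => ?_⟩
  have : MvPolynomial.eval c (linForm p) ≠ 0 := by
    intro h0
    apply hc
    rw [hP, map_prod]
    exact Finset.prod_eq_zero hp h0
  rw [aeval_linForm]
  simpa [linForm, mul_comm] using this

lemma psep_mono [Infinite k] {X : Finset (Fin (n + 1) → k)} (hX0 : ∀ p ∈ X, p ≠ 0)
    {p : Fin (n + 1) → k} (hp : p ∈ X) {t t' : ℕ} (htt' : t ≤ t')
    (h : PSep X p t) : PSep X p t' := by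
  induction t' with
  | zero => simpa [Nat.le_zero.mp htt'] using h
  | succ t'' ih =>
    rcases Nat.lt_or_ge t (t'' + 1) with hlt | hge
    · have hle : t ≤ t'' := Nat.lt_succ_iff.mp hlt
      obtain ⟨F, hFV, hF0, hFp⟩ := ih hle
      obtain ⟨c, hc⟩ := exists_linForm X hX0
      refine ⟨F * linForm c, ?_, ?_, ?_⟩
      · rw [mem_homogeneousSubmodule]
        exact ((mem_homogeneousSubmodule _ _).mp hFV).mul
          ((mem_homogeneousSubmodule _ _).mp (linForm_mem_V c))
      · intro q hq hqp
        rw [map_mul, hF0 q hq hqp, zero_mul]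
      · rw [map_mul]
        exact mul_ne_zero hFp (hc p hp)
    · have : t = t'' + 1 := le_antisymm htt' hge
      subst this; exact h

lemma exists_psep [Infinite k] {X : Finset (Fin (n + 1) → k)}
    (hXdist : ∀ p ∈ X, ∀ q ∈ X, p ≠ q → ∀ c : k, p ≠ c • q)
    {p : Fin (n + 1) → k} (hp : p ∈ X) : ∃ t, PSep X p t := by
  classical
  -- for each q ≠ p in X, a linear functional vanishing at q but not p
  have hfun : ∀ q ∈ X.erase p, ∃ c : Fin (n + 1) → k,
      aeval q (linForm c) = 0 ∧ aeval p (linForm c) ≠ 0 := by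
    intro q hq
    have hqp : q ≠ p := Finset.ne_of_mem_erase hq
    have hpnotin : p ∉ Submodule.span k {q} := by
      rw [Submodule.mem_span_singleton]
      rintro ⟨a, rfl⟩
      exact hXdist _ hp q (Finset.mem_of_mem_erase hq) (fun h => hqp h.symm) a rfl
    obtain ⟨f, hfp, hfq⟩ :=
      (Submodule.span k {q}).exists_dual_map_eq_bot_of_notMem hpnotin inferInstance
    have hq0 : f q = 0 := by
      have : f q ∈ (Submodule.span k {q}).map f :=
        Submodule.mem_map_of_mem (Submodule.mem_span_singleton_self q)
      rw [hfq] at this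
      exact (Submodule.mem_bot k).mp this
    refine ⟨fun i => f (Pi.single i 1), ?_, ?_⟩
    · rw [aeval_linForm]
      have : ∑ i, f (Pi.single i 1) * q i = f q := by
        conv_rhs => rw [pi_eq_sum_univ q]
        rw [map_sum]
        exact Finset.sum_congr rfl fun i _ => by
          rw [map_smul, smul_eq_mul, mul_comm]
          congr 2
          ext j
          simp [Pi.single_apply, eq_comm]
      rw [this, hq0]
    · rw [aeval_linForm]
      have : ∑ i, f (Pi.single i 1) * p i = f p := by
        conv_rhs => rw [pi_eq_sum_univ p]
        rw [map_sum]
        exact Finset.sum_congr rfl fun i _ => by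
          rw [map_smul, smul_eq_mul, mul_comm]
          congr 2
          ext j
          simp [Pi.single_apply, eq_comm]
      rw [this]
      exact hfp
  choose c hc0 hcp using hfun
  refine ⟨(X.erase p).card, ∏ q ∈ (X.erase p).attach, linForm (c q q.2), ?_, ?_, ?_⟩
  · rw [mem_homogeneousSubmodule]
    have := MvPolynomial.IsHomogeneous.prod (X.erase p).attach
      (fun q => linForm (c q.1 q.2)) (fun _ => 1)
      (fun q _ => (mem_homogeneousSubmodule _ _).mp (linForm_mem_V (c q.1 q.2)))
    simpa using this
  · intro q hq hqp
    rw [map_prod]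
    exact Finset.prod_eq_zero (Finset.mem_attach _ ⟨q, Finset.mem_erase.mpr ⟨hqp, hq⟩⟩)
      (hc0 q (Finset.mem_erase.mpr ⟨hqp, hq⟩))
  · rw [map_prod]
    exact Finset.prod_ne_zero_iff.mpr fun q _ => hcp q.1 q.2

lemma vpiece_erase_of_not_psep {X : Finset (Fin (n + 1) → k)} {p : Fin (n + 1) → k}
    (h : ¬ PSep X p t) : vpiece k n (X.erase p) t = vpiece k n X t := by
  apply le_antisymm
  · intro F hF
    rw [vpiece, Submodule.mem_inf] at hF
    obtain ⟨hFV, hFk⟩ := hF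
    simp only [Submodule.mem_iInf, LinearMap.mem_ker, AlgHom.toLinearMap_apply] at hFk
    have hFp : aeval p F = 0 := by
      by_contra hne
      exact h ⟨F, hFV, fun q hq hqp => hFk q (Finset.mem_erase.mpr ⟨hqp, hq⟩), hne⟩
    rw [vpiece, Submodule.mem_inf]
    refine ⟨hFV, ?_⟩
    simp only [Submodule.mem_iInf, LinearMap.mem_ker, AlgHom.toLinearMap_apply]
    intro q hq
    by_cases hqp : q = p
    · subst hqp; exact hFp
    · exact hFk q (Finset.mem_erase.mpr ⟨hqp, hq⟩)
  · rw [vpiece, vpiece]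
    apply inf_le_inf_left
    exact le_iInf₂ fun q hq => iInf₂_le q (Finset.mem_of_mem_erase hq)

lemma hilb_erase_of_full {X : Finset (Fin (n + 1) → k)} {p : Fin (n + 1) → k} (hp : p ∈ X)
    {t : ℕ} (h : hilb k n X t = X.card) : hilb k n (X.erase p) t = X.card - 1 := by
  have hsep := psep_of_hilb_eq_card X t h
  have : hilb k n (X.erase p) t = (X.erase p).card := by
    apply hilb_eq_card_of_psep
    intro q hq
    obtain ⟨F, hFV, hF0, hFq⟩ := hsep q (Finset.mem_of_mem_erase hq)
    exact ⟨F, hFV, fun r hr hrq => hF0 r (Finset.mem_of_mem_erase hr) hrq, hFq⟩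
  rw [this, Finset.card_erase_of_mem hp]

lemma exists_erase [Infinite k] {X : Finset (Fin (n + 1) → k)}
    (hX0 : ∀ p ∈ X, p ≠ 0)
    (hXdist : ∀ p ∈ X, ∀ q ∈ X, p ≠ q → ∀ c : k, p ≠ c • q)
    (hne : X.Nonempty) :
    ∃ p ∈ X, ∀ t, hilb k n (X.erase p) t = min (hilb k n X t) (X.card - 1) := by
  classical
  have hsp : ∀ q ∈ X, ∃ t, PSep X q t := fun q hq => exists_psep hXdist hq
  set sp : (Fin (n + 1) → k) → ℕ := fun q =>
    if hq : q ∈ X then Nat.find (hsp q hq) else 0 with hspdef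
  obtain ⟨p, hp, hmax⟩ := X.exists_max_image sp hne
  refine ⟨p, hp, fun t => ?_⟩
  by_cases hfull : hilb k n X t = X.card
  · rw [hilb_erase_of_full hp hfull, hfull]
    omega
  · -- not full rank: p is not separated at degree t
    have hnot : ¬ PSep X p t := by
      intro hPS
      apply hfull
      apply hilb_eq_card_of_psep
      intro q hq
      have h1 : sp q ≤ sp p := hmax q hq
      have h2 : sp p ≤ t := by
        rw [hspdef]
        simp only [dif_pos hp]
        exact Nat.find_min' (hsp p hp) hPS
      have h3 : PSep X q (sp q) := by
        rw [hspdef]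
        simp only [dif_pos hq]
        exact Nat.find_spec (hsp q hq)
      exact psep_mono hX0 hq (le_trans h1 h2) h3
    have hv := vpiece_erase_of_not_psep (t := t) hnot
    have heq : hilb k n (X.erase p) t = hilb k n X t := by
      rw [hilb, hilb, hv]
    rw [heq]
    have := hilb_le_card X t
    omega

lemma aux_main [Infinite k] :
    ∀ d : ℕ, ∀ X : Finset (Fin (n + 1) → k),
      (∀ p ∈ X, p ≠ 0) →
      (∀ p ∈ X, ∀ q ∈ X, p ≠ q → ∀ c : k, p ≠ c • q) →
      X.card = d → ∀ e : ℕ, 1 ≤ e → e ≤ d →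
      ∃ Y ⊆ X, Y.card = e ∧ ∀ t, hilb k n Y t = min (hilb k n X t) e := by
  intro d
  induction d with
  | zero => intro X _ _ _ e he1 he2; omega
  | succ d ih =>
    intro X hX0 hXdist hcard e he1 he2
    rcases Nat.lt_or_ge e (d + 1) with hlt | hge
    · -- e ≤ d : remove a point
      have hne : X.Nonempty := Finset.card_pos.mp (by omega)
      obtain ⟨p, hp, hperase⟩ := exists_erase hX0 hXdist hne
      set X' := X.erase p with hX'
      have hX'card : X'.card = d := by rw [hX', Finset.card_erase_of_mem hp, hcard]; omega
      have hX'sub : X' ⊆ X := Finset.erase_subset _ _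
      obtain ⟨Y, hYsub, hYcard, hY⟩ := ih X'
        (fun q hq => hX0 q (hX'sub hq))
        (fun q hq r hr => hXdist q (hX'sub hq) r (hX'sub hr))
        hX'card e he1 (by omega)
      refine ⟨Y, hYsub.trans hX'sub, hYcard, fun t => ?_⟩
      rw [hY t, hperase t, hcard]
      have := hilb_le_card X t
      omega
    · -- e = d + 1 : take Y = X
      have : e = d + 1 := le_antisymm he2 hge
      subst this
      refine ⟨X, le_refl _, hcard, fun t => ?_⟩
      have := hilb_le_card X t
      omega

variable (k)

/-- If `X` is a set of `d` distinct points of `ℙⁿ` over an algebraically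
closed field and `1 ≤ e < d`, then there is a subset `Y ⊆ X` of exactly `e` points with
`h_Y(t) = min (h_X(t)) e` for all `t`. -/
theorem exists_subset_truncated_hilbert (n d e : ℕ) [IsAlgClosed k]
    (X : Finset (Fin (n + 1) → k))
    (hX0 : ∀ p ∈ X, p ≠ 0)
    (hXdist : ∀ p ∈ X, ∀ q ∈ X, p ≠ q → ∀ c : k, p ≠ c • q)
    (hcard : X.card = d) (he1 : 1 ≤ e) (he2 : e < d) :
    ∃ Y ⊆ X, Y.card = e ∧ ∀ t, hilb k n Y t = min (hilb k n X t) e := by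
  exact aux_main d X hX0 hXdist hcard e he1 (le_of_lt he2)

end
end

section
/- Let D be a zero-dimensional subscheme of P^2, C = H ∩ K a complete intersection of forms H, K with D ⊆ C (scheme-theoretically at each point considered), and let Y = SH + TK be a form such that at every point Q in the support of D, the local germ Y_Q lies in I(C)_Q · I(D)_Q. Then (possibly after modifying S and T by a multiple of K and H respectively) one has S, T ∈ I(D) locally at every point of the support of D; in particular if this holds at all points of Supp(D) then S, T ∈ I(D) globally. -/
/-- local step of the final argument of Section 5.  Let `R` be the
local ring of `ℙ²` at a point `Q` of the support of `D` — abstractly, a local unique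
factorization domain.  Let `H, K ∈ R` be germs of a regular sequence (no common prime
factor, `K ≠ 0`), generating `I(C)_Q`, contained in the ideal `I = I(D)_Q` (so `D ⊆ C`
locally), and let `Y = S·H + T·K` with `Y_Q ∈ I(C)_Q · I(D)_Q`.  Then, after modifying
`S` by a multiple of `K` and `T` by the corresponding multiple of `H`, both coefficients
lie in `I`: there is `c ∈ R` with `S − cK ∈ I` and `T + cH ∈ I`. -/
theorem local_coefficients_in_ideal (R : Type*) [CommRing R] [IsDomain R]
    [UniqueFactorizationMonoid R] [IsLocalRing R]
    (H K : R) (hK0 : K ≠ 0)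
    (hcop : ∀ p : R, p ∣ H → p ∣ K → IsUnit p)
    (I : Ideal R) (hHI : H ∈ I) (hKI : K ∈ I)
    (Y S T : R) (hY : Y = S * H + T * K)
    (hloc : Y ∈ Ideal.span ({H, K} : Set R) * I) :
    ∃ c : R, S - c * K ∈ I ∧ T + c * H ∈ I := by
  -- First, extract a representation Y = a*H + b*K with a, b ∈ I.
  have hrep : ∃ a b : R, a ∈ I ∧ b ∈ I ∧ Y = a * H + b * K := by
    refine Submodule.mul_induction_on hloc ?_ ?_
    · intro x hx y hy
      obtain ⟨u, v, huv⟩ := Ideal.mem_span_pair.mp hx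
      exact ⟨u * y, v * y, I.mul_mem_left u hy, I.mul_mem_left v hy, by
        rw [← huv]; ring⟩
    · rintro x y ⟨a, b, ha, hb, hx⟩ ⟨a', b', ha', hb', hy⟩
      exact ⟨a + a', b + b', I.add_mem ha ha', I.add_mem hb hb', by
        rw [hx, hy]; ring⟩
  obtain ⟨a, b, ha, hb, hab⟩ := hrep
  -- (S - a) * H = (b - T) * K
  have key : (S - a) * H = (b - T) * K := by
    have := hab.symm.trans hY
    linear_combination -this
  have hrel : IsRelPrime K H := fun z hK hH => hcop z hH hK
  have hdvd : K ∣ S - a := hrel.dvd_of_dvd_mul_right ⟨b - T, by rw [key]; ring⟩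
  obtain ⟨c, hc⟩ := hdvd
  refine ⟨c, ?_, ?_⟩
  · have : S - c * K = a := by rw [mul_comm c K, ← hc]; ring
    rwa [this]
  · have hbT : b - T = c * H := by
      have : (c * H) * K = (b - T) * K := by
        rw [← key, hc]; ring
      exact (mul_right_cancel₀ hK0 this).symm
    have : T + c * H = b := by rw [← hbT]; ring
    rwa [this]
end
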